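/- arXiv:2605.28711 — 2 statements merged into one kernel-verified Lean document; each statement's English description precedes it below -/
import Mathlib

section
/- Let p be a μ-strongly log-concave probability density on ℝ^n with finite second moment, global maximizer (mode) x* and mean m = ∫ x p(x) dx. Then ‖x* − m‖² ≤ (n/μ)·(sup_x p(x))·(2π/μ)^{n/2}. In particular, if (sup_x p(x))·(2π/μ)^{n/2} ≤ 1, then ‖x* − m‖² ≤ n/μ. -/
/-!
Since `-log p` is `μ`-strongly convex and minimal at the mode `x*`, it grows at least like
`μ/2 ‖x - x*‖²`, so `p ≤ p(x*) exp (-μ/2 ‖x - x*‖²)`. Jensen's inequality gives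
`‖x* - m‖² ≤ ∫ p ‖x - x*‖²`, and the Gaussian domination bounds this by `p(x*)` times the
Gaussian second moment `(n/μ)(2π/μ)^{n/2}`, computed in polar coordinates from `Γ(s + 1) = s Γ(s)`.
-/

open MeasureTheory Set Real

/-- A probability density `p` on `ℝⁿ` is `μc`-strongly log-concave if `-log p` is twice
continuously differentiable and `μc`-strongly convex. -/
def StronglyLogConcave {n : ℕ} (μc : ℝ) (p : EuclideanSpace ℝ (Fin n) → ℝ) : Prop :=
  ContDiff ℝ 2 (fun x => -Real.log (p x)) ∧
    StrongConvexOn Set.univ μc (fun x => -Real.log (p x))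

theorem integral_rpow_add_two_mul_exp_neg_mul_sq {b q : ℝ} (hb : 0 < b) (hq : -1 < q) :
    ∫ x in Ioi (0 : ℝ), x ^ (q + 2) * exp (-b * x ^ 2)
      = (q + 1) / (2 * b) * ∫ x in Ioi (0 : ℝ), x ^ q * exp (-b * x ^ 2) := by
  have hΓ := integral_rpow_mul_exp_neg_mul_rpow two_pos (by linarith : -1 < q + 2) hb
  have hΓ' := integral_rpow_mul_exp_neg_mul_rpow two_pos hq hb
  simp only [rpow_two] at hΓ hΓ'
  rw [hΓ, hΓ', show (q + 2 + 1) / 2 = (q + 1) / 2 + 1 by ring,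
    Gamma_add_one (by linarith : (q + 1) / 2 ≠ 0),
    show -(q + 2 + 1) / 2 = -(q + 1) / 2 + -1 by ring, rpow_add hb, rpow_neg_one]
  field_simp

section Haar

variable {E : Type*} [NormedAddCommGroup E] [NormedSpace ℝ E] [FiniteDimensional ℝ E]
  [MeasurableSpace E] [BorelSpace E] [Nontrivial E] (μ : Measure E) [μ.IsAddHaarMeasure]
  {b : ℝ}

theorem integrable_norm_pow_mul_exp_neg_mul_sq_norm (hb : 0 < b) (k : ℕ) :
    Integrable (fun x => ‖x‖ ^ k * exp (-b * ‖x‖ ^ 2)) μ := by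
  rw [integrable_fun_norm_addHaar μ (f := fun r => r ^ k * exp (-b * r ^ 2))]
  refine (integrableOn_rpow_mul_exp_neg_mul_sq hb
    (neg_one_lt_zero.trans_le (Nat.cast_nonneg (Module.finrank ℝ E - 1 + k)))).congr_fun
    (fun y _ => ?_) measurableSet_Ioi
  simp only [rpow_natCast, smul_eq_mul, pow_add]
  ring

theorem integral_norm_sq_mul_exp_neg_mul_sq_norm (hb : 0 < b) :
    ∫ x, ‖x‖ ^ 2 * exp (-b * ‖x‖ ^ 2) ∂μ
      = Module.finrank ℝ E / (2 * b) * ∫ x, exp (-b * ‖x‖ ^ 2) ∂μ := by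
  rw [integral_fun_norm_addHaar μ (fun r => r ^ 2 * exp (-b * r ^ 2)),
    integral_fun_norm_addHaar μ (fun r => exp (-b * r ^ 2))]
  set d := Module.finrank ℝ E
  have hd : 1 ≤ d := Module.finrank_pos
  have hradial := integral_rpow_add_two_mul_exp_neg_mul_sq hb
    (neg_one_lt_zero.trans_le (Nat.cast_nonneg (d - 1)))
  rw [show ((d - 1 : ℕ) : ℝ) + 2 = ((d - 1 + 2 : ℕ) : ℝ) by push_cast; ring,
    show ((d - 1 : ℕ) : ℝ) + 1 = d by rw [Nat.cast_sub hd]; ring] at hradial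
  simp only [rpow_natCast, pow_add, mul_assoc] at hradial
  simp only [smul_eq_mul, hradial]
  ring

theorem integrable_mul_norm_sub_pow_of_le_gaussian {p : E → ℝ} {x₀ : E} {C : ℝ} (hb : 0 < b)
    (hpm : AEStronglyMeasurable p μ) (hp : 0 ≤ p) (hle : ∀ x, p x ≤ C * exp (-b * ‖x - x₀‖ ^ 2))
    (k : ℕ) : Integrable (fun x => p x * ‖x - x₀‖ ^ k) μ := by
  have hgauss :=
    ((integrable_norm_pow_mul_exp_neg_mul_sq_norm μ hb k).comp_sub_right x₀).const_mul C
  have hcont : Continuous fun x => ‖x - x₀‖ ^ k := by fun_prop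
  refine hgauss.mono' (hpm.mul hcont.aestronglyMeasurable) (ae_of_all _ fun x => ?_)
  rw [norm_of_nonneg (mul_nonneg (hp x) (by positivity))]
  calc p x * ‖x - x₀‖ ^ k ≤ C * exp (-b * ‖x - x₀‖ ^ 2) * ‖x - x₀‖ ^ k := by gcongr; exact hle x
    _ = C * (‖x - x₀‖ ^ k * exp (-b * ‖x - x₀‖ ^ 2)) := by ring

theorem integrable_smul_sub_of_le_gaussian {p : E → ℝ} {x₀ : E} {C : ℝ} (hb : 0 < b)
    (hpm : AEStronglyMeasurable p μ) (hp : 0 ≤ p) (hle : ∀ x, p x ≤ C * exp (-b * ‖x - x₀‖ ^ 2)) :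
    Integrable (fun x => p x • (x - x₀)) μ := by
  refine (integrable_mul_norm_sub_pow_of_le_gaussian μ hb hpm hp hle 1).mono'
    (hpm.smul (by fun_prop : Continuous fun x => x - x₀).aestronglyMeasurable)
    (ae_of_all _ fun x => ?_)
  rw [norm_smul, norm_of_nonneg (hp x), pow_one]

theorem integral_mul_norm_sub_sq_le_of_le_gaussian {p : E → ℝ} {x₀ : E} {C : ℝ} (hb : 0 < b)
    (hpm : AEStronglyMeasurable p μ) (hp : 0 ≤ p) (hle : ∀ x, p x ≤ C * exp (-b * ‖x - x₀‖ ^ 2)) :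
    ∫ x, p x * ‖x - x₀‖ ^ 2 ∂μ
      ≤ C * (Module.finrank ℝ E / (2 * b) * ∫ x, exp (-b * ‖x‖ ^ 2) ∂μ) := by
  rw [← integral_norm_sq_mul_exp_neg_mul_sq_norm μ hb,
    ← integral_sub_right_eq_self (fun x => ‖x‖ ^ 2 * exp (-b * ‖x‖ ^ 2)) x₀,
    ← integral_const_mul]
  refine integral_mono (integrable_mul_norm_sub_pow_of_le_gaussian μ hb hpm hp hle 2)
    (((integrable_norm_pow_mul_exp_neg_mul_sq_norm μ hb 2).comp_sub_right x₀).const_mul C)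
    fun x => ?_
  calc p x * ‖x - x₀‖ ^ 2 ≤ C * exp (-b * ‖x - x₀‖ ^ 2) * ‖x - x₀‖ ^ 2 := by gcongr; exact hle x
    _ = C * (‖x - x₀‖ ^ 2 * exp (-b * ‖x - x₀‖ ^ 2)) := by ring

end Haar

theorem sq_integral_mul_le_integral_mul_sq {α : Type*} [MeasurableSpace α] {μ : Measure α}
    {w g : α → ℝ} (hw : 0 ≤ w) (hw1 : ∫ a, w a ∂μ = 1)
    (hwg : Integrable (fun a => w a * g a) μ) (hwg2 : Integrable (fun a => w a * g a ^ 2) μ) :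
    (∫ a, w a * g a ∂μ) ^ 2 ≤ ∫ a, w a * g a ^ 2 ∂μ := by
  set I := ∫ a, w a * g a ∂μ
  have hw_int : Integrable w μ := .of_integral_ne_zero (by simp [hw1])
  have hvar : 0 ≤ ∫ a, w a * (g a - I) ^ 2 ∂μ :=
    integral_nonneg fun a => mul_nonneg (hw a) (sq_nonneg _)
  have hexpand : ∫ a, w a * (g a - I) ^ 2 ∂μ = ∫ a, w a * g a ^ 2 ∂μ - I ^ 2 := by
    have hwg2' : Integrable (fun a => w a * g a ^ 2 - 2 * I * (w a * g a)) μ :=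
      hwg2.sub (hwg.const_mul _)
    calc ∫ a, w a * (g a - I) ^ 2 ∂μ
        = ∫ a, (w a * g a ^ 2 - 2 * I * (w a * g a) + I ^ 2 * w a) ∂μ := by
          congr 1; ext a; ring
      _ = ∫ a, w a * g a ^ 2 ∂μ - I ^ 2 := by
          rw [integral_add hwg2' (hw_int.const_mul _), integral_sub hwg2 (hwg.const_mul _),
            integral_const_mul, integral_const_mul, hw1]
          ring
  linarith

theorem norm_sub_integral_smul_sq_le {F : Type*} [NormedAddCommGroup F] [NormedSpace ℝ F]
    [CompleteSpace F] [MeasurableSpace F] {μ : Measure F} {w : F → ℝ} (hw : 0 ≤ w)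
    (hw1 : ∫ x, w x ∂μ = 1) (c : F) (h1 : Integrable (fun x => w x • (x - c)) μ)
    (h2 : Integrable (fun x => w x * ‖x - c‖ ^ 2) μ) :
    ‖c - ∫ x, w x • x ∂μ‖ ^ 2 ≤ ∫ x, w x * ‖x - c‖ ^ 2 ∂μ := by
  have hw_int : Integrable w μ := .of_integral_ne_zero (by simp [hw1])
  have hnorm : ∀ x, ‖w x • (x - c)‖ = w x * ‖x - c‖ := fun x => by
    rw [norm_smul, norm_of_nonneg (hw x)]
  have hmean : ∫ x, w x • x ∂μ = ∫ x, w x • (x - c) ∂μ + c := by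
    have := integral_add h1 (hw_int.smul_const c)
    simp only [← smul_add, sub_add_cancel] at this
    rw [this, integral_smul_const, hw1, one_smul]
  calc ‖c - ∫ x, w x • x ∂μ‖ ^ 2 = ‖∫ x, w x • (x - c) ∂μ‖ ^ 2 := by
        rw [hmean, sub_add_cancel_right, norm_neg]
    _ ≤ (∫ x, w x * ‖x - c‖ ∂μ) ^ 2 := by
        gcongr
        exact (norm_integral_le_integral_norm _).trans_eq (by simp only [hnorm])
    _ ≤ ∫ x, w x * ‖x - c‖ ^ 2 ∂μ :=
        sq_integral_mul_le_integral_mul_sq hw hw1 (h1.norm.congr (ae_of_all _ hnorm)) h2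

theorem StrictConvexOn.isMinOn_neg_log_of_isMaxOn {E : Type*} [AddCommGroup E] [Module ℝ E]
    {p : E → ℝ} {x₀ : E} (hf : StrictConvexOn ℝ univ fun x => -log (p x)) (hp : 0 ≤ p)
    (hmax : IsMaxOn p univ x₀) (h₀ : 0 < p x₀) : IsMinOn (fun x => -log (p x)) univ x₀ := by
  -- Where `p` vanishes, `-log p` takes the junk value `0`, which strict convexity must exclude
  -- from lying below `-log (p x₀)`.
  have hdich : ∀ y, -log (p x₀) ≤ -log (p y) ∨ -log (p y) = 0 := fun y => by
    rcases (hp y).lt_or_eq with hy | hy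
    · exact .inl (neg_le_neg (log_le_log hy (hmax (mem_univ y))))
    · simp [← hy]
  refine isMinOn_univ_iff.2 fun x => (hdich x).elim id fun hx => ?_
  rw [hx]
  by_contra! hlt
  have hnonneg : ∀ y, 0 ≤ -log (p y) := fun y => (hdich y).elim hlt.le.trans (·.ge)
  have hxx₀ : x ≠ x₀ := by rintro rfl; linarith
  set z := (1 / 2 : ℝ) • x + (1 / 2 : ℝ) • x₀
  have hz : -log (p z) = 0 := by
    refine (hdich z).resolve_left fun hz => ?_
    have := hf.convexOn.2 (mem_univ x) (mem_univ x₀) (by norm_num : (0 : ℝ) ≤ 1 / 2)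
      (by norm_num : (0 : ℝ) ≤ 1 / 2) (by norm_num)
    simp only [smul_eq_mul, hx] at this
    linarith
  have hxz : x ≠ z := fun h => hxx₀ <| sub_eq_zero.1 <| by
    rw [show x - x₀ = (2 : ℝ) • (x - z) by simp only [z]; module, h, sub_self, smul_zero]
  have := hf.2 (mem_univ x) (mem_univ z) hxz (by norm_num : (0 : ℝ) < 1 / 2)
    (by norm_num : (0 : ℝ) < 1 / 2) (by norm_num)
  simp only [smul_eq_mul, hx, hz] at this
  linarith [hnonneg ((1 / 2 : ℝ) • x + (1 / 2 : ℝ) • z)]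

theorem StrongConvexOn.add_sq_norm_sub_le_of_isMinOn {E : Type*} [NormedAddCommGroup E]
    [NormedSpace ℝ E] {s : Set E} {m : ℝ} {f : E → ℝ} {x₀ x : E} (hf : StrongConvexOn s m f)
    (hmin : IsMinOn f s x₀) (hx₀ : x₀ ∈ s) (hx : x ∈ s) :
    f x₀ + m / 2 * ‖x - x₀‖ ^ 2 ≤ f x := by
  set c := m / 2 * ‖x - x₀‖ ^ 2 with hc_def
  have hgap : f x₀ ≤ f x := hmin hx
  have hseg : ∀ t, 0 < t → t ≤ 1 → (1 - t) * c ≤ f x - f x₀ := by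
    intro t ht0 ht1
    have hconv := hf.2 hx₀ hx (sub_nonneg.2 ht1) ht0.le (by ring)
    have hmin_t : f x₀ ≤ f ((1 - t) • x₀ + t • x) :=
      hmin (hf.1 hx₀ hx (sub_nonneg.2 ht1) ht0.le (by ring))
    simp only [smul_eq_mul] at hconv
    rw [norm_sub_rev, ← hc_def] at hconv
    refine le_of_mul_le_mul_left ?_ ht0
    nlinarith
  by_contra! hlt
  have hc : 0 < c := by linarith
  -- at `t = (c - Δ) / (2c)`, where `Δ = f x - f x₀ < c`, the segment bound gives `(c + Δ) / 2 ≤ Δ`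
  have := hseg ((c - (f x - f x₀)) / (2 * c)) (by apply div_pos <;> linarith)
    (by rw [div_le_one (by positivity)]; linarith)
  field_simp at this
  nlinarith

theorem le_mul_exp_of_strongConvexOn_neg_log {E : Type*} [NormedAddCommGroup E]
    [NormedSpace ℝ E] {p : E → ℝ} {m : ℝ} {x₀ : E} (hm : 0 < m)
    (hf : StrongConvexOn univ m fun x => -log (p x)) (hp : 0 ≤ p) (hmax : IsMaxOn p univ x₀)
    (h₀ : 0 < p x₀) (x : E) : p x ≤ p x₀ * exp (-(m / 2) * ‖x - x₀‖ ^ 2) := by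
  have hgrowth := hf.add_sq_norm_sub_le_of_isMinOn
    ((hf.strictConvexOn hm).isMinOn_neg_log_of_isMaxOn hp hmax h₀) (mem_univ x₀) (mem_univ x)
  rcases (hp x).lt_or_eq with hx | hx
  · calc p x = exp (log (p x)) := (exp_log hx).symm
      _ ≤ exp (log (p x₀) + -(m / 2) * ‖x - x₀‖ ^ 2) := exp_le_exp.2 (by linarith)
      _ = p x₀ * exp (-(m / 2) * ‖x - x₀‖ ^ 2) := by rw [exp_add, exp_log h₀]
  · rw [← hx]
    positivity

theorem mode_mean_dist_sq_le_of_stronglyLogConcave_general {n : ℕ} (μc : ℝ) (hμc : 0 < μc)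
    (p : EuclideanSpace ℝ (Fin n) → ℝ) (hp : ∀ x, 0 ≤ p x)
    (hint : ∫ x, p x = 1)
    (hlc : StronglyLogConcave μc p)
    (xs : EuclideanSpace ℝ (Fin n)) (hmode : ∀ x, p x ≤ p xs)
    (m : EuclideanSpace ℝ (Fin n)) (hm : m = ∫ x, p x • x) :
    ‖xs - m‖ ^ 2 ≤ (n / μc) * (⨆ x, p x) * (2 * π / μc) ^ ((n : ℝ) / 2) ∧
      ((⨆ x, p x) * (2 * π / μc) ^ ((n : ℝ) / 2) ≤ 1 → ‖xs - m‖ ^ 2 ≤ n / μc) := by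
  rcases Nat.eq_zero_or_pos n with rfl | hn
  · simp [Subsingleton.elim xs m]
  have : NeZero n := ⟨hn.ne'⟩
  have hpm : AEStronglyMeasurable p := (Integrable.of_integral_ne_zero (by simp [hint])).1
  have hpxs : 0 < p xs := by
    refine (hp xs).lt_of_ne fun h => ?_
    have : p = 0 := funext fun x => le_antisymm ((hmode x).trans h.ge) (hp x)
    simp [this] at hint
  have hb : 0 < μc / 2 := by positivity
  have hgauss := le_mul_exp_of_strongConvexOn_neg_log hμc hlc.2 hp (fun x _ => hmode x) hpxs
  have hbound : ‖xs - m‖ ^ 2 ≤ p xs * (n / μc * (2 * π / μc) ^ ((n : ℝ) / 2)) :=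
    calc ‖xs - m‖ ^ 2 ≤ ∫ x, p x * ‖x - xs‖ ^ 2 :=
          hm ▸ norm_sub_integral_smul_sq_le hp hint xs
            (integrable_smul_sub_of_le_gaussian _ hb hpm hp hgauss)
            (integrable_mul_norm_sub_pow_of_le_gaussian _ hb hpm hp hgauss 2)
      _ ≤ _ := integral_mul_norm_sub_sq_le_of_le_gaussian _ hb hpm hp hgauss
      _ = _ := by
        rw [GaussianFourier.integral_rexp_neg_mul_sq_norm hb, finrank_euclideanSpace_fin,
          show 2 * (μc / 2) = μc by ring, show π / (μc / 2) = 2 * π / μc by field_simp]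
  rw [ciSup_eq_of_forall_le_of_forall_lt_exists_gt hmode fun _ hw => ⟨xs, hw⟩]
  refine ⟨by linarith, fun h => hbound.trans ?_⟩
  calc p xs * (n / μc * (2 * π / μc) ^ ((n : ℝ) / 2))
      = n / μc * (p xs * (2 * π / μc) ^ ((n : ℝ) / 2)) := by ring
    _ ≤ n / μc * 1 := by gcongr
    _ = n / μc := mul_one _

/-- For a `μc`-strongly log-concave probability density on `ℝⁿ` with finite second moment,
mode `xs` and mean `m`, one has `‖xs − m‖² ≤ (n/μc)·(sup p)·(2π/μc)^{n/2}`; in particular,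
if `(sup p)·(2π/μc)^{n/2} ≤ 1` then `‖xs − m‖² ≤ n/μc`. -/
theorem mode_mean_dist_sq_le_of_stronglyLogConcave {n : ℕ} (μc : ℝ) (hμc : 0 < μc)
    (p : EuclideanSpace ℝ (Fin n) → ℝ) (hp : ∀ x, 0 ≤ p x)
    (hint : ∫ x, p x = 1)
    (hlc : StronglyLogConcave μc p)
    (hmom : Integrable (fun x => ‖x‖ ^ 2 * p x))
    (xs : EuclideanSpace ℝ (Fin n)) (hmode : ∀ x, p x ≤ p xs)
    (m : EuclideanSpace ℝ (Fin n)) (hm : m = ∫ x, p x • x) :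
    ‖xs - m‖ ^ 2 ≤ (n / μc) * (⨆ x, p x) * (2 * π / μc) ^ ((n : ℝ) / 2) ∧
      ((⨆ x, p x) * (2 * π / μc) ^ ((n : ℝ) / 2) ≤ 1 → ‖xs - m‖ ^ 2 ≤ n / μc) :=
  mode_mean_dist_sq_le_of_stronglyLogConcave_general μc hμc p hp hint hlc xs hmode m hm
end

section
/- (Analytic core of Lemma B.4, Grönwall form.) Let ᾱ: [0, T] → (0, 1] be continuously differentiable with ᾱ(0) = 1, and define f(t) = d/dt log √(ᾱ(t)) and g²(t) = d/dt(1 − ᾱ(t)) − 2 f(t)(1 − ᾱ(t)), assumed nonnegative. Let L ∈ ℝ, let Δ: [0, T] → [0, ∞) be continuous, fix t₀ ∈ (0, T], and let W: [0, t₀] → [0, ∞) be differentiable and satisfy −W'(t) ≤ (f(t) + L·g²(t))·W(t) + g²(t)·Δ(t) for all t ∈ [0, t₀]. Then W(0) ≤ ᾱ(t₀)^{1/2 − L}·W(t₀) + ∫₀^{t₀} g²(r)·ᾱ(r)^{1/2 − L}·Δ(r) dr. -/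
open MeasureTheory Set Real intervalIntegral

/-!
With `f = α'/(2α)` the defining formula for `g2` collapses to `g2 = -2 f`, so that
`f + L g2 = (1 - 2L) f` is the logarithmic derivative of `α ^ (1/2 - L)`.  This power is
therefore an integrating factor: `-(α ^ (1/2 - L) W)' ≤ α ^ (1/2 - L) g2 Δ`, and integrating over
`[0, t₀]` with `α 0 = 1` gives the bound.
-/

theorem mul_le_mul_add_integral_of_neg_deriv_le {E c W W' ψ : ℝ → ℝ} {a b : ℝ} (hab : a ≤ b)
    (hE : ∀ t ∈ Icc a b, HasDerivAt E (c t * E t) t) (hEnn : ∀ t ∈ Ioo a b, 0 ≤ E t)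
    (hW : ∀ t ∈ Icc a b, HasDerivAt W (W' t) t)
    (hψ : IntegrableOn (fun t => E t * ψ t) (Icc a b))
    (hineq : ∀ t ∈ Ioo a b, -W' t ≤ c t * W t + ψ t) :
    E a * W a ≤ E b * W b + ∫ t in a..b, E t * ψ t := by
  have hEW : ∀ t ∈ Icc a b,
      HasDerivAt (fun s => -(E s * W s)) (-(c t * E t * W t + E t * W' t)) t :=
    fun t ht => ((hE t ht).mul (hW t ht)).neg
  have key := sub_le_integral_of_hasDeriv_right_of_le hab
    (fun t ht => (hEW t ht).continuousAt.continuousWithinAt)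
    (fun t ht => (hEW t (Ioo_subset_Icc_self ht)).hasDerivWithinAt) hψ
    (fun t ht => by
      have := mul_le_mul_of_nonneg_left (hineq t ht) (hEnn t ht)
      linarith)
  linarith

theorem HasDerivAt.rpow_const_of_eq_mul {α : ℝ → ℝ} {k t : ℝ} (p : ℝ)
    (hα : HasDerivAt α (k * α t) t) (hpos : 0 < α t) :
    HasDerivAt (fun s => α s ^ p) (p * k * α t ^ p) t := by
  convert hα.rpow_const (p := p) (Or.inl hpos.ne') using 1
  rw [rpow_sub_one hpos.ne']
  field_simp

theorem HasDerivAt.log_sqrt {α : ℝ → ℝ} {a t : ℝ} (hα : HasDerivAt α a t) (hpos : 0 < α t) :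
    HasDerivAt (fun s => Real.log √(α s)) (a / (2 * α t)) t := by
  convert (hα.sqrt hpos.ne').log (sqrt_ne_zero'.2 hpos) using 1
  rw [div_div, mul_assoc, mul_self_sqrt hpos.le]

theorem gronwall_lemma_B4_general (T : ℝ) (α α' : ℝ → ℝ)
    (hα : ∀ t ∈ Icc (0 : ℝ) T, HasDerivAt α (α' t) t)
    (hα' : ContinuousOn α' (Icc (0 : ℝ) T))
    (hrange : ∀ t ∈ Icc (0 : ℝ) T, α t ∈ Ioc (0 : ℝ) 1) (h0 : α 0 = 1)
    (f g2 : ℝ → ℝ)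
    (hf : ∀ t ∈ Icc (0 : ℝ) T, f t = deriv (fun s => Real.log (Real.sqrt (α s))) t)
    (hg2 : ∀ t ∈ Icc (0 : ℝ) T,
      g2 t = deriv (fun s => 1 - α s) t - 2 * f t * (1 - α t))
    (L : ℝ) (Δ : ℝ → ℝ)
    (hΔ : ContinuousOn Δ (Icc (0 : ℝ) T))
    (t₀ : ℝ) (ht₀ : t₀ ∈ Ioc (0 : ℝ) T)
    (W W' : ℝ → ℝ) (hW : ∀ t ∈ Icc (0 : ℝ) t₀, HasDerivAt W (W' t) t)
    (hineq : ∀ t ∈ Icc (0 : ℝ) t₀,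
      -W' t ≤ (f t + L * g2 t) * W t + g2 t * Δ t) :
    W 0 ≤ α t₀ ^ ((1 : ℝ) / 2 - L) * W t₀ +
      ∫ r in (0 : ℝ)..t₀, g2 r * α r ^ ((1 : ℝ) / 2 - L) * Δ r := by
  have hsub : Icc 0 t₀ ⊆ Icc 0 T := Icc_subset_Icc le_rfl ht₀.2
  have hpos : ∀ t ∈ Icc (0 : ℝ) T, 0 < α t := fun t ht => (hrange t ht).1
  have hα'_eq : ∀ t ∈ Icc (0 : ℝ) T, α' t = 2 * f t * α t := by
    intro t ht
    rw [hf t ht, ((hα t ht).log_sqrt (hpos t ht)).deriv]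
    field_simp [(hpos t ht).ne']
  have hg2_eq : ∀ t ∈ Icc (0 : ℝ) T, g2 t = -2 * f t := by
    intro t ht
    rw [hg2 t ht, ((hα t ht).const_sub 1).deriv, hα'_eq t ht]
    ring
  have hE : ∀ t ∈ Icc (0 : ℝ) t₀, HasDerivAt (fun s => α s ^ ((1 : ℝ) / 2 - L))
      ((f t + L * g2 t) * α t ^ ((1 : ℝ) / 2 - L)) t := by
    intro t ht
    convert (hα'_eq t (hsub ht) ▸ hα t (hsub ht)).rpow_const_of_eq_mul ((1 : ℝ) / 2 - L)
      (hpos t (hsub ht)) using 2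
    rw [hg2_eq t (hsub ht)]
    ring
  have hαc : ContinuousOn α (Icc 0 T) := fun t ht => (hα t ht).continuousAt.continuousWithinAt
  have hg2c : ContinuousOn g2 (Icc 0 T) :=
    (hα'.neg.div hαc fun t ht => (hpos t ht).ne').congr fun t ht => by
      rw [Pi.div_apply, Pi.neg_apply, hg2_eq t ht, hα'_eq t ht]
      field_simp [(hpos t ht).ne']
  have hint : IntegrableOn (fun t => α t ^ ((1 : ℝ) / 2 - L) * (g2 t * Δ t)) (Icc 0 t₀) :=
    (((hαc.rpow_const fun t ht => Or.inl (hpos t ht).ne').mul (hg2c.mul hΔ)).mono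
      hsub).integrableOn_compact isCompact_Icc
  have key := mul_le_mul_add_integral_of_neg_deriv_le ht₀.1.le hE
    (fun t ht => (rpow_pos_of_pos (hpos t (hsub (Ioo_subset_Icc_self ht))) _).le) hW hint
    (fun t ht => hineq t (Ioo_subset_Icc_self ht))
  rw [h0, one_rpow, one_mul] at key
  convert key using 2
  exact integral_congr fun r _ => by ring

/-- **Analytic core of Lemma B.4 (Grönwall form).**
Let `α : [0, T] → (0, 1]` be continuously differentiable with `α 0 = 1`, let
`f t = d/dt log √(α t)` and `g2 t = d/dt (1 − α t) − 2 f t (1 − α t)` be nonnegative,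
let `Δ ≥ 0` be continuous, and let `W ≥ 0` be differentiable with
`−W' t ≤ (f t + L·g2 t)·W t + g2 t·Δ t` on `[0, t₀]`.  Then
`W 0 ≤ α t₀ ^ (1/2 − L) · W t₀ + ∫₀^{t₀} g2 r · α r ^ (1/2 − L) · Δ r dr`. -/
theorem gronwall_lemma_B4 (T : ℝ) (hT : 0 < T) (α α' : ℝ → ℝ)
    (hα : ∀ t ∈ Icc (0 : ℝ) T, HasDerivAt α (α' t) t)
    (hα' : ContinuousOn α' (Icc (0 : ℝ) T))
    (hrange : ∀ t ∈ Icc (0 : ℝ) T, α t ∈ Ioc (0 : ℝ) 1) (h0 : α 0 = 1)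
    (f g2 : ℝ → ℝ)
    (hf : ∀ t ∈ Icc (0 : ℝ) T, f t = deriv (fun s => Real.log (Real.sqrt (α s))) t)
    (hg2 : ∀ t ∈ Icc (0 : ℝ) T,
      g2 t = deriv (fun s => 1 - α s) t - 2 * f t * (1 - α t))
    (hg2nn : ∀ t ∈ Icc (0 : ℝ) T, 0 ≤ g2 t)
    (L : ℝ) (Δ : ℝ → ℝ)
    (hΔ : ContinuousOn Δ (Icc (0 : ℝ) T)) (hΔnn : ∀ t ∈ Icc (0 : ℝ) T, 0 ≤ Δ t)
    (t₀ : ℝ) (ht₀ : t₀ ∈ Ioc (0 : ℝ) T)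
    (W W' : ℝ → ℝ) (hW : ∀ t ∈ Icc (0 : ℝ) t₀, HasDerivAt W (W' t) t)
    (hWnn : ∀ t ∈ Icc (0 : ℝ) t₀, 0 ≤ W t)
    (hineq : ∀ t ∈ Icc (0 : ℝ) t₀,
      -W' t ≤ (f t + L * g2 t) * W t + g2 t * Δ t) :
    W 0 ≤ α t₀ ^ ((1 : ℝ) / 2 - L) * W t₀ +
      ∫ r in (0 : ℝ)..t₀, g2 r * α r ^ ((1 : ℝ) / 2 - L) * Δ r :=
  gronwall_lemma_B4_general T α α' hα hα' hrange h0 f g2 hf hg2 L Δ hΔ t₀ ht₀ W W' hW hineq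
end
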